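/- arXiv:1401.8031 — 5 statements merged into one kernel-verified Lean document; each statement's English description precedes it below -/
import Mathlib

section
/- Mason–Stothers theorem: if a, b, c are coprime polynomials over ℂ, not all constant, with a + b = c, then max(deg a, deg b, deg c) ≤ N₀(abc) − 1, where N₀(f) denotes the number of distinct roots of f. -/
/-!
Apply Mathlib's polynomial abc theorem `Polynomial.abc` to `a + b + (-c) = 0`: via the Wronskian
`a b' - a' b` it bounds each degree strictly by the degree of `rad(abc)` unless all three
derivatives vanish, which in characteristic zero means all three are constant. Over an
algebraically closed field the radical is squarefree, hence separable and split, so its degree is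
its number of roots, all of which are roots of `abc`.
-/

open Polynomial UniqueFactorizationMonoid

namespace Polynomial

variable {k : Type*} [Field k] [DecidableEq k]

theorem natDegree_radical_le_card_roots_toFinset [IsAlgClosed k] {f : k[X]} (hf : f ≠ 0) :
    (radical f).natDegree ≤ f.roots.toFinset.card := by
  have hsep : (radical f).Separable :=
    PerfectField.separable_iff_squarefree.mpr squarefree_radical
  have hroots_sub : (radical f).roots.toFinset ⊆ f.roots.toFinset :=
    Multiset.toFinset_subset.mpr (Multiset.subset_of_le (roots.le_of_dvd hf radical_dvd_self))
  calc (radical f).natDegree = (radical f).roots.card := IsAlgClosed.card_roots_eq_natDegree.symm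
    _ = (radical f).roots.toFinset.card := (Multiset.toFinset_card_of_nodup (nodup_roots hsep)).symm
    _ ≤ f.roots.toFinset.card := Finset.card_le_card hroots_sub

theorem natDegree_eq_zero_of_isCoprime_of_add_eq_of_mul_eq_zero {R : Type*} [CommRing R]
    [IsDomain R] {a b c : R[X]} (hab : IsCoprime a b) (hsum : a + b = c) (habc : a * b * c = 0) :
    a.natDegree = 0 ∧ b.natDegree = 0 ∧ c.natDegree = 0 := by
  rcases mul_eq_zero.mp habc with hab0 | rfl
  · rcases mul_eq_zero.mp hab0 with rfl | rfl
    · have hb : IsUnit b := isCoprime_zero_left.mp hab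
      subst hsum
      simp [natDegree_eq_zero_of_isUnit hb]
    · have ha : IsUnit a := isCoprime_zero_right.mp hab
      subst hsum
      simp [natDegree_eq_zero_of_isUnit ha]
  · have hb : b = -a := eq_neg_of_add_eq_zero_right hsum
    subst hb
    have ha : IsUnit a := isCoprime_self.mp ((IsCoprime.neg_right_iff a a).mp hab)
    simp [natDegree_eq_zero_of_isUnit ha]

theorem max_natDegree_lt_natDegree_radical [CharZero k] {a b c : k[X]} (hab : IsCoprime a b)
    (hsum : a + b = c) (hconst : ¬(a.natDegree = 0 ∧ b.natDegree = 0 ∧ c.natDegree = 0)) :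
    max (max a.natDegree b.natDegree) c.natDegree < (radical (a * b * c)).natDegree := by
  have habc : a * b * c ≠ 0 := fun h =>
    hconst (natDegree_eq_zero_of_isCoprime_of_add_eq_of_mul_eq_zero hab hsum h)
  obtain ⟨ha, hb⟩ := mul_ne_zero_iff.mp (left_ne_zero_of_mul habc)
  have hc : c ≠ 0 := right_ne_zero_of_mul habc
  have hsum' : a + b + -c = 0 := by rw [hsum, add_neg_cancel]
  rcases Polynomial.abc ha hb (neg_ne_zero.mpr hc) hab hsum' with ⟨hda, hdb, hdc⟩ | ⟨hda, hdb, hdc⟩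
  · have hrad : radical (a * b * -c) = radical (a * b * c) := by
      rw [mul_neg, UniqueFactorizationDomain.radical_neg]
    rw [hrad] at hda hdb hdc
    rw [natDegree_neg] at hdc
    omega
  · rw [derivative_neg, neg_eq_zero] at hdc
    exact absurd ⟨derivative_eq_zero.mp hda, derivative_eq_zero.mp hdb,
      derivative_eq_zero.mp hdc⟩ hconst

end Polynomial

theorem mason_stothers_general (a b c : Polynomial ℂ)
    (hab : IsCoprime a b)
    (hsum : a + b = c)
    (hconst : ¬ (a.natDegree = 0 ∧ b.natDegree = 0 ∧ c.natDegree = 0)) :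
    (max (max a.natDegree b.natDegree) c.natDegree : ℤ) ≤
      ((a * b * c).roots.toFinset.card : ℤ) - 1 := by
  have habc : a * b * c ≠ 0 := fun h =>
    hconst (natDegree_eq_zero_of_isCoprime_of_add_eq_of_mul_eq_zero hab hsum h)
  have := (max_natDegree_lt_natDegree_radical hab hsum hconst).trans_le
    (natDegree_radical_le_card_roots_toFinset habc)
  omega

/-- Mason–Stothers theorem over `ℂ`: if `a, b, c` are pairwise coprime
polynomials, not all constant, with `a + b = c`, then
`max (deg a) (deg b) (deg c) ≤ N₀(abc) − 1`, where `N₀(f)` is the number of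
distinct roots of `f`. -/
theorem mason_stothers (a b c : Polynomial ℂ)
    (hab : IsCoprime a b) (hbc : IsCoprime b c) (hac : IsCoprime a c)
    (hsum : a + b = c)
    (hconst : ¬ (a.natDegree = 0 ∧ b.natDegree = 0 ∧ c.natDegree = 0)) :
    (max (max a.natDegree b.natDegree) c.natDegree : ℤ) ≤
      ((a * b * c).roots.toFinset.card : ℤ) - 1 :=
  mason_stothers_general a b c hab hsum hconst
end

section
/- If rational functions f, g, h over ℂ satisfy f^n + g^n = h^n with n ≥ 3, then f, g, h all lie in a one-dimensional ℂ-subspace of the field of rational functions (i.e., the triple is trivial). -/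
/-! Clearing denominators turns the equation into one between polynomials. If one of the three
polynomials vanishes, the other two have associated `n`-th powers, hence are associated in the
integrally closed domain `K[X]`. Otherwise, after dividing out the gcd, the Mason–Stothers theorem
forces the coprime solution to be constant (`fermatLastTheoremWith'_polynomial`). -/

open Polynomial

def IsTrivialTriple (K : Type*) {A : Type*} [SMul K A] (f g h : A) : Prop :=
  ∃ (F : A) (a b c : K), f = a • F ∧ g = b • F ∧ h = c • F

namespace IsTrivialTriple

variable {K A B : Type*} [CommSemiring K] [Semiring A] [Algebra K A] [Semiring B] [Algebra K B]
  {f g h : A}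

theorem map (φ : A →ₐ[K] B) (ht : IsTrivialTriple K f g h) :
    IsTrivialTriple K (φ f) (φ g) (φ h) := by
  obtain ⟨F, a, b, c, rfl, rfl, rfl⟩ := ht
  exact ⟨φ F, a, b, c, map_smul φ a F, map_smul φ b F, map_smul φ c F⟩

theorem mul_left (r : A) (ht : IsTrivialTriple K f g h) :
    IsTrivialTriple K (r * f) (r * g) (r * h) := by
  obtain ⟨F, a, b, c, rfl, rfl, rfl⟩ := ht
  exact ⟨r * F, a, b, c, mul_smul_comm a r F, mul_smul_comm b r F, mul_smul_comm c r F⟩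

theorem of_mul_left {L : Type*} [Field L] [Algebra K L] {f g h r : L} (hr : r ≠ 0)
    (ht : IsTrivialTriple K (r * f) (r * g) (r * h)) : IsTrivialTriple K f g h := by
  simpa only [inv_mul_cancel_left₀ hr] using ht.mul_left r⁻¹

end IsTrivialTriple

namespace Polynomial

variable {R K : Type*}

theorem exists_smul_eq_of_associated [CommRing R] [IsDomain R] {p q : R[X]}
    (hpq : Associated p q) : ∃ r : R, q = r • p := by
  obtain ⟨u, rfl⟩ := hpq
  obtain ⟨r, -, hr⟩ := isUnit_iff.mp u.isUnit
  exact ⟨r, by rw [← hr, smul_eq_C_mul, mul_comm]⟩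

theorem isTrivialTriple_of_fermat [Field K] {n : ℕ} (hn : 3 ≤ n) (hnK : (n : K) ≠ 0)
    {a b c : K[X]} (heq : a ^ n + b ^ n = c ^ n) : IsTrivialTriple K a b c := by
  have hn0 : n ≠ 0 := by omega
  by_cases ha : a = 0
  · subst ha
    rw [zero_pow hn0, zero_add] at heq
    obtain ⟨r, rfl⟩ := exists_smul_eq_of_associated ((Associated.pow_iff hn0).mp (.of_eq heq))
    exact ⟨b, 0, 1, r, (zero_smul K b).symm, (one_smul K b).symm, rfl⟩
  by_cases hb : b = 0
  · subst hb
    rw [zero_pow hn0, add_zero] at heq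
    obtain ⟨r, rfl⟩ := exists_smul_eq_of_associated ((Associated.pow_iff hn0).mp (.of_eq heq))
    exact ⟨a, 1, 0, r, (one_smul K a).symm, (zero_smul K a).symm, rfl⟩
  by_cases hc : c = 0
  · subst hc
    rw [zero_pow hn0, add_eq_zero_iff_eq_neg] at heq
    obtain ⟨r, rfl⟩ := exists_smul_eq_of_associated
      ((Associated.pow_iff hn0).mp (Associated.neg_right_iff.mp (.of_eq heq))).symm
    exact ⟨b, r, 1, 0, rfl, (one_smul K b).symm, (zero_smul K b).symm⟩
  obtain ⟨d, a', b', c', ⟨rfl, rfl, rfl⟩, ua, ub, uc⟩ :=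
    fermatLastTheoremWith'_polynomial hn hnK a b c ha hb hc heq
  obtain ⟨u, hu⟩ := exists_smul_eq_of_associated (associated_unit_mul_left d a' ua).symm
  obtain ⟨v, hv⟩ := exists_smul_eq_of_associated (associated_unit_mul_left d b' ub).symm
  obtain ⟨w, hw⟩ := exists_smul_eq_of_associated (associated_unit_mul_left d c' uc).symm
  exact ⟨d, u, v, w, hu, hv, hw⟩

end Polynomial

theorem RatFunc.isTrivialTriple_of_fermat {K : Type*} [Field K] {n : ℕ} (hn : 3 ≤ n)
    (hnK : (n : K) ≠ 0) {f g h : RatFunc K} (heq : f ^ n + g ^ n = h ^ n) :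
    IsTrivialTriple K f g h := by
  classical
  obtain ⟨⟨D, hD⟩, hint⟩ := IsLocalization.exist_integer_multiples_of_finset
    (nonZeroDivisors K[X]) ({f, g, h} : Finset (RatFunc K))
  obtain ⟨a, ha⟩ := hint f (by simp)
  obtain ⟨b, hb⟩ := hint g (by simp)
  obtain ⟨c, hc⟩ := hint h (by simp)
  have hpoly : a ^ n + b ^ n = c ^ n := by
    apply IsFractionRing.injective K[X] (RatFunc K)
    simp only [map_add, map_pow, ha, hb, hc, _root_.smul_pow, ← smul_add, heq]
  have htriv := (Polynomial.isTrivialTriple_of_fermat hn hnK hpoly).map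
    (IsScalarTower.toAlgHom K K[X] (RatFunc K))
  simp only [IsScalarTower.coe_toAlgHom', ha, hb, hc, Algebra.smul_def] at htriv
  exact htriv.of_mul_left (RatFunc.algebraMap_ne_zero (nonZeroDivisors.ne_zero hD))

/-- Fermat's last theorem for rational functions: if `f, g, h ∈ ℂ(z)` satisfy
`f^n + g^n = h^n` with `n ≥ 3`, then `f, g, h` all lie in a one-dimensional
`ℂ`-subspace of `ℂ(z)`. -/
theorem ratfunc_fermat (n : ℕ) (hn : 3 ≤ n) (f g h : RatFunc ℂ)
    (heq : f ^ n + g ^ n = h ^ n) :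
    ∃ (F : RatFunc ℂ) (a b c : ℂ), f = a • F ∧ g = b • F ∧ h = c • F :=
  RatFunc.isTrivialTriple_of_fermat hn (Nat.cast_ne_zero.mpr (by omega)) heq
end

section
/- Let θ be a finite Blaschke product, realized as a rational function B(z) = c·∏_{k=1}^{N}((z − a_k)/(1 − conj(a_k)·z)) with |c| = 1 and |a_k| < 1. Every element of the model space K_θ (functions f holomorphic on the disk with f and conj(z)·conj(f)·θ both in the Hardy class, equivalently rational functions of the form p(z)/∏(1 − conj(a_k)z) with deg p ≤ N − 1) is a rational function; hence for n ≥ 3 the equation f^n + g^n = h^n has no nontrivial solutions with f, g, h ∈ K_θ. -/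
/-!
Every element of the model space is `p / D` for the single denominator
`D = ∏ (1 - conj (a k) X)`, which is nonzero since `D(0) = 1`. Clearing it turns a Fermat triple in
the model space into a polynomial one, `p ^ n + q ^ n = r ^ n`. If `p, q, r` are all nonzero,
Mason–Stothers (`fermatLastTheoremWith'_polynomial`) makes them unit multiples of a common
polynomial; if one of them vanishes, the other two have associated `n`-th powers, so they are
associated themselves because `k[X]` is integrally closed.
-/

open Polynomial

namespace Polynomial

variable {k : Type*} [Field k]

lemma exists_eq_smul_of_associated_pow {n : ℕ} (hn : n ≠ 0) {p q : k[X]}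
    (h : Associated (p ^ n) (q ^ n)) : ∃ c : k, p = c • q := by
  obtain ⟨u, hu⟩ := ((Associated.pow_iff hn).mp h).symm
  obtain ⟨c, -, hc⟩ := isUnit_iff.mp u.isUnit
  exact ⟨c, by rw [← hu, ← hc, smul_eq_C_mul, mul_comm]⟩

theorem exists_smul_of_pow_add_pow_eq_pow {n : ℕ} (hn : 3 ≤ n) (chn : (n : k) ≠ 0)
    {a b c : k[X]} (heq : a ^ n + b ^ n = c ^ n) :
    ∃ (d : k[X]) (α β γ : k), a = α • d ∧ b = β • d ∧ c = γ • d := by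
  have hn0 : n ≠ 0 := by omega
  rcases eq_or_ne a 0 with rfl | ha
  · rw [zero_pow hn0, zero_add] at heq
    obtain ⟨β, rfl⟩ := exists_eq_smul_of_associated_pow hn0 (.of_eq heq)
    exact ⟨c, 0, β, 1, by simp, rfl, by simp⟩
  rcases eq_or_ne b 0 with rfl | hb
  · rw [zero_pow hn0, add_zero] at heq
    obtain ⟨α, rfl⟩ := exists_eq_smul_of_associated_pow hn0 (.of_eq heq)
    exact ⟨c, α, 0, 1, rfl, by simp, by simp⟩
  rcases eq_or_ne c 0 with rfl | hc
  · rw [zero_pow hn0, add_eq_zero_iff_eq_neg] at heq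
    have hab : Associated (a ^ n) (b ^ n) := heq ▸ .neg_left .rfl
    obtain ⟨α, rfl⟩ := exists_eq_smul_of_associated_pow hn0 hab
    exact ⟨b, α, 1, 0, rfl, by simp, by simp⟩
  obtain ⟨d, a', b', c', ⟨rfl, rfl, rfl⟩, ha', hb', hc'⟩ :=
    fermatLastTheoremWith'_polynomial hn chn a b c ha hb hc heq
  obtain ⟨α, -, rfl⟩ := isUnit_iff.mp ha'
  obtain ⟨β, -, rfl⟩ := isUnit_iff.mp hb'
  obtain ⟨γ, -, rfl⟩ := isUnit_iff.mp hc'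
  exact ⟨d, α, β, γ, (smul_eq_C_mul α).symm, (smul_eq_C_mul β).symm, (smul_eq_C_mul γ).symm⟩

lemma prod_one_sub_C_mul_X_ne_zero {R ι : Type*} [CommRing R] [Nontrivial R] (s : Finset ι)
    (a : ι → R) : ∏ i ∈ s, (1 - C (a i) * X) ≠ 0 := by
  intro h
  simpa [eval_prod] using congrArg (eval 0) h

end Polynomial

namespace RatFunc

variable {k : Type*} [Field k]

local notation "ι" => algebraMap k[X] (RatFunc k)

theorem exists_smul_of_div_pow_add_div_pow_eq_div_pow {n : ℕ} (hn : 3 ≤ n)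
    (chn : (n : k) ≠ 0) {D p q r : k[X]} (hD : D ≠ 0)
    (heq : (ι p / ι D) ^ n + (ι q / ι D) ^ n = (ι r / ι D) ^ n) :
    ∃ (F : RatFunc k) (α β γ : k),
      ι p / ι D = α • F ∧ ι q / ι D = β • F ∧ ι r / ι D = γ • F := by
  have hD' : ι D ^ n ≠ 0 := pow_ne_zero n (algebraMap_ne_zero hD)
  rw [div_pow, div_pow, div_pow, ← add_div, div_left_inj' hD', ← map_pow, ← map_pow, ← map_pow,
    ← map_add, (algebraMap_injective k).eq_iff] at heq
  obtain ⟨P, α, β, γ, rfl, rfl, rfl⟩ := Polynomial.exists_smul_of_pow_add_pow_eq_pow hn chn heq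
  refine ⟨ι P / ι D, α, β, γ, ?_, ?_, ?_⟩ <;>
    exact (congrArg (· / ι D) (algebraMap.coe_smul _ P _)).trans (smul_div_assoc _ _ _)

end RatFunc

theorem blaschke_model_space_fermat_general (N : ℕ) (a : Fin N → ℂ)
    (K : Set (RatFunc ℂ))
    (hK : K = {f : RatFunc ℂ | ∃ p : Polynomial ℂ, p.natDegree < N ∧
      f = algebraMap (Polynomial ℂ) (RatFunc ℂ) p /
        algebraMap (Polynomial ℂ) (RatFunc ℂ)
          (∏ k, (1 - C (starRingEnd ℂ (a k)) * X))})
    (n : ℕ) (hn : 3 ≤ n) (f g h : RatFunc ℂ)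
    (hf : f ∈ K) (hg : g ∈ K) (hh : h ∈ K)
    (heq : f ^ n + g ^ n = h ^ n) :
    ∃ (F : RatFunc ℂ) (α β γ : ℂ), f = α • F ∧ g = β • F ∧ h = γ • F := by
  subst hK
  obtain ⟨p, -, rfl⟩ := hf
  obtain ⟨q, -, rfl⟩ := hg
  obtain ⟨r, -, rfl⟩ := hh
  exact RatFunc.exists_smul_of_div_pow_add_div_pow_eq_div_pow hn (Nat.cast_ne_zero.mpr (by omega))
    (prod_one_sub_C_mul_X_ne_zero _ _) heq

/-- The model space of a finite Blaschke product
`B(z) = c ∏ (z − a k)/(1 − conj (a k) z)` consists of rational functions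
`p(z)/∏ (1 − conj (a k) z)` with `deg p ≤ N − 1`; for `n ≥ 3` the Fermat
equation `f^n + g^n = h^n` has no nontrivial solutions in this space. -/
theorem blaschke_model_space_fermat (N : ℕ) (a : Fin N → ℂ) (c : ℂ)
    (hc : ‖c‖ = 1) (ha : ∀ k, ‖a k‖ < 1)
    (K : Set (RatFunc ℂ))
    (hK : K = {f : RatFunc ℂ | ∃ p : Polynomial ℂ, p.natDegree < N ∧
      f = algebraMap (Polynomial ℂ) (RatFunc ℂ) p /
        algebraMap (Polynomial ℂ) (RatFunc ℂ)
          (∏ k, (1 - C (starRingEnd ℂ (a k)) * X))})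
    (n : ℕ) (hn : 3 ≤ n) (f g h : RatFunc ℂ)
    (hf : f ∈ K) (hg : g ∈ K) (hh : h ∈ K)
    (heq : f ^ n + g ^ n = h ^ n) :
    ∃ (F : RatFunc ℂ) (α β γ : ℂ), f = α • F ∧ g = β • F ∧ h = γ • F :=
  blaschke_model_space_fermat_general N a K hK n hn f g h hf hg hh heq
end

section
/- Let N ≥ 1. The monomials e_k(z) = λ z^k with |λ| = 1 and 0 ≤ k ≤ N are extreme points of the closed unit ball of 𝒫_N (polynomials of degree ≤ N with sup-norm on the unit circle): if P, Q ∈ 𝒫_N have ‖P‖_∞ ≤ 1, ‖Q‖_∞ ≤ 1 and (P + Q)/2 = λ z^k with |λ| = 1, then P = Q = λ z^k. -/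
open Polynomial

/-! On the unit circle `P(z)` and `Q(z)` lie in the closed unit disc and their midpoint `λ z^k`
lies on its boundary; by strict convexity of the disc, `P(z) = Q(z)`. Two polynomials that agree
on the (infinite) unit circle are equal, so `P = Q = λ z^k`. -/

theorem eq_of_norm_le_of_norm_add_eq {E : Type*} [NormedAddCommGroup E] [NormedSpace ℝ E]
    [StrictConvexSpace ℝ E] {x y : E} {r : ℝ} (hx : ‖x‖ ≤ r) (hy : ‖y‖ ≤ r)
    (hxy : ‖x + y‖ = 2 * r) : x = y := by
  by_contra hne
  have := norm_combo_lt_of_ne hx hy hne one_half_pos one_half_pos (add_halves 1)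
  rw [← smul_add, norm_smul, hxy] at this
  norm_num at this
  linarith

theorem Complex.infinite_sphere (c : ℂ) {r : ℝ} (hr : 0 < r) : (Metric.sphere c r).Infinite :=
  (isPreconnected_sphere (by simp) c r).infinite_of_nontrivial
    ⟨c + r, by simp [abs_of_pos hr], c - r, by simp [abs_of_pos hr], fun h => by
      have := congrArg Complex.re h
      simp only [Complex.add_re, Complex.sub_re, Complex.ofReal_re] at this
      linarith⟩

theorem Polynomial.eq_of_eqOn_sphere {p q : ℂ[X]} {c : ℂ} {r : ℝ} (hr : 0 < r)
    (h : Set.EqOn (p.eval ·) (q.eval ·) (Metric.sphere c r)) : p = q :=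
  p.eq_of_infinite_eval_eq q ((Complex.infinite_sphere c hr).mono h)

theorem monomial_extreme_general (k : ℕ) (l : ℂ)
    (hl : ‖l‖ = 1) (P Q : Polynomial ℂ)
    (hP : ∀ z : ℂ, ‖z‖ = 1 → ‖P.eval z‖ ≤ 1)
    (hQ : ∀ z : ℂ, ‖z‖ = 1 → ‖Q.eval z‖ ≤ 1)
    (hmid : P + Q = C (2 * l) * X ^ k) :
    P = C l * X ^ k ∧ Q = C l * X ^ k := by
  obtain rfl : P = Q := Polynomial.eq_of_eqOn_sphere one_pos fun z hz => by
    rw [mem_sphere_zero_iff_norm] at hz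
    refine eq_of_norm_le_of_norm_add_eq (hP z hz) (hQ z hz) ?_
    rw [← eval_add, hmid]
    simp [hl, hz]
  have hPl : P = C l * X ^ k := by
    refine mul_left_cancel₀ (two_ne_zero : (2 : ℂ[X]) ≠ 0) ?_
    rw [two_mul, hmid, C_mul, C_ofNat, mul_assoc]
  exact ⟨hPl, hPl⟩

/-- The monomials `λ z^k` with `|λ| = 1`, `0 ≤ k ≤ N`, are extreme points of
the closed unit ball of `𝒫_N` (polynomials of degree ≤ N with sup-norm on the
unit circle): if `P, Q ∈ 𝒫_N` are bounded by `1` on the circle and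
`(P + Q)/2 = λ z^k`, then `P = Q = λ z^k`. -/
theorem monomial_extreme (N : ℕ) (hN : 1 ≤ N) (k : ℕ) (hk : k ≤ N) (l : ℂ)
    (hl : ‖l‖ = 1) (P Q : Polynomial ℂ)
    (hPdeg : P.natDegree ≤ N) (hQdeg : Q.natDegree ≤ N)
    (hP : ∀ z : ℂ, ‖z‖ = 1 → ‖P.eval z‖ ≤ 1)
    (hQ : ∀ z : ℂ, ‖z‖ = 1 → ‖Q.eval z‖ ≤ 1)
    (hmid : P + Q = C (2 * l) * X ^ k) :
    P = C l * X ^ k ∧ Q = C l * X ^ k :=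
  monomial_extreme_general k l hl P Q hP hQ hmid
end

section
/- There exist unit-norm polynomials P, Q of the same degree N (for some N) such that 1 − |P(z)|² = 2(1 − |Q(z)|²) for all |z| = 1, P is a non-extreme point of the unit ball of 𝒫_N, and Q is an extreme point. Concretely, one may verify such an example with explicit low-degree polynomials. -/
/-!
On the unit circle `|a z² - b|² = (a + b)² - 4ab (Re z)²` for real `a, b`, and
`Q(z) = (3z² + 8z - 3)/10 = z (4/5 + (3/5) i Im z)` has `|Q(z)|² = 1 - (9/25) (Re z)²`.
Taking `a + b = 1`, `ab = 9/50` and `P(z) = a z² - b` gives `1 - |P|² = 2 (1 - |Q|²)`.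

`P` is not extreme: it is the midpoint of `z²` and `(a - b) z² - 2b`, both of sup-norm `1`.
`Q` is extreme: if `Q ± R` lie in the unit ball, then `R` vanishes at `±i`, where `|Q| = 1`
(the closed disc is strictly convex), so `R = c (z² + 1)`. Moreover `|Q ± R|` attains its maximum
`1` on the circle at `±i`, and the first-order conditions there force `c = 0`.
-/

open Polynomial Complex ComplexConjugate

theorem eq_zero_of_add_mem_of_sub_mem_of_mem_extremePoints {𝕜 E : Type*} [Field 𝕜]
    [LinearOrder 𝕜] [IsStrictOrderedRing 𝕜] [AddCommGroup E] [Module 𝕜 E] {S : Set E} {x v : E}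
    (hx : x ∈ S.extremePoints 𝕜) (hadd : x + v ∈ S) (hsub : x - v ∈ S) : v = 0 := by
  have := (mem_extremePoints.1 hx).2 _ hsub _ hadd (mem_openSegment_sub_add (𝕜 := 𝕜) x v)
  simpa using this.1

theorem im_conj_mul_deriv_eq_zero_of_max_on_circle {f : ℂ → ℂ} {f' z₀ : ℂ}
    (hf : HasDerivAt f f' z₀) (hz₀ : ‖z₀‖ = 1)
    (hmax : ∀ z : ℂ, ‖z‖ = 1 → ‖f z‖ ≤ ‖f z₀‖) :
    (conj (f z₀) * (z₀ * f')).im = 0 := by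
  set w := conj (f z₀)
  have hcirc : HasDerivAt (fun s : ℂ => z₀ * exp (s * I)) (z₀ * I) 0 := by
    simpa using ((hasDerivAt_id (0 : ℂ)).mul_const I).cexp.const_mul z₀
  have hderiv : HasDerivAt (fun t : ℝ => (w * f (z₀ * exp (t * I))).re)
      (w * (f' * (z₀ * I))).re 0 := by
    have := (hf.comp_of_eq (0 : ℂ) hcirc (by simp)).const_mul w
    exact HasDerivAt.real_of_complex (e := fun s => w * f (z₀ * exp (s * I))) (by simpa using this)
  have hlocalMax : IsLocalMax (fun t : ℝ => (w * f (z₀ * exp (t * I))).re) 0 := by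
    refine Filter.Eventually.of_forall fun t => ?_
    calc (w * f (z₀ * exp (t * I))).re ≤ ‖w * f (z₀ * exp (t * I))‖ := re_le_norm _
      _ ≤ ‖f z₀‖ * ‖f z₀‖ := by
        rw [norm_mul, norm_conj]
        gcongr
        exact hmax _ (by simp [hz₀, norm_exp_ofReal_mul_I])
      _ = (w * f (z₀ * exp ((0 : ℝ) * I))).re := by
        rw [← sq, Complex.sq_norm]; simp [w, normSq_apply]
  have := hlocalMax.hasDerivAt_eq_zero hderiv
  rwa [show w * (f' * (z₀ * I)) = w * (z₀ * f') * I by ring, mul_I_re, neg_eq_zero] at this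

theorem eq_zero_and_im_conj_mul_deriv_eq_zero_of_norm_add_sub_le_one {f g : ℂ → ℂ}
    {f' g' z₀ : ℂ} (hf : HasDerivAt f f' z₀) (hg : HasDerivAt g g' z₀) (hz₀ : ‖z₀‖ = 1)
    (hf₀ : ‖f z₀‖ = 1) (hadd : ∀ z : ℂ, ‖z‖ = 1 → ‖f z + g z‖ ≤ 1)
    (hsub : ∀ z : ℂ, ‖z‖ = 1 → ‖f z - g z‖ ≤ 1) :
    g z₀ = 0 ∧ (conj (f z₀) * (z₀ * g')).im = 0 := by
  have hg₀ : g z₀ = 0 :=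
    eq_zero_of_add_mem_of_sub_mem_of_mem_extremePoints
      (StrictConvexSpace.sphere_subset_extremePoints_closedBall 0 one_ne_zero
        (by simpa using hf₀))
      (by simpa using hadd z₀ hz₀) (by simpa using hsub z₀ hz₀)
  have hplus := im_conj_mul_deriv_eq_zero_of_max_on_circle (hf.add hg) hz₀
    (fun z hz => by simpa [hg₀, hf₀] using hadd z hz)
  have hminus := im_conj_mul_deriv_eq_zero_of_max_on_circle (hf.sub hg) hz₀
    (fun z hz => by simpa [hg₀, hf₀] using hsub z hz)
  simp only [Pi.add_apply, Pi.sub_apply, hg₀, add_zero, sub_zero, mul_add, mul_sub, add_im,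
    sub_im] at hplus hminus
  exact ⟨hg₀, by linarith⟩

theorem eq_C_leadingCoeff_mul_of_natDegree_le_two {K : Type*} [Field K] {p : K[X]} {a b : K}
    (hab : a ≠ b) (hp : p.natDegree ≤ 2) (ha : p.IsRoot a) (hb : p.IsRoot b) :
    p = C p.leadingCoeff * ((X - C a) * (X - C b)) := by
  have hdvd : (X - C a) * (X - C b) ∣ p :=
    (isCoprime_X_sub_C_of_isUnit_sub (sub_ne_zero.2 hab).isUnit).mul_dvd
      (dvd_iff_isRoot.2 ha) (dvd_iff_isRoot.2 hb)
  refine eq_leadingCoeff_mul_of_monic_of_dvd_of_natDegree_le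
    ((monic_X_sub_C a).mul (monic_X_sub_C b)) hdvd ?_
  rwa [natDegree_mul (X_sub_C_ne_zero a) (X_sub_C_ne_zero b), natDegree_X_sub_C,
    natDegree_X_sub_C]

theorem eval_derivative_C_mul_X_sub_C_mul_X_sub_C {R : Type*} [CommRing R] (c a b : R) :
    (C c * ((X - C a) * (X - C b))).derivative.eval a = c * (a - b) := by
  simp

theorem re_sq_add_im_sq_of_norm_eq_one {z : ℂ} (hz : ‖z‖ = 1) : z.re ^ 2 + z.im ^ 2 = 1 := by
  rw [sq, sq, ← normSq_apply, normSq_eq_norm_sq, hz, one_pow]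

namespace ExtremePair

noncomputable def quadPoly (α β : ℝ) : ℂ[X] := C (α : ℂ) * X ^ 2 - C (β : ℂ)

variable {α β α' β' : ℝ} {z : ℂ}

theorem natDegree_quadPoly_le (α β : ℝ) : (quadPoly α β).natDegree ≤ 2 := by
  unfold quadPoly; compute_degree

theorem quadPoly_ne_zero (hβ : β ≠ 0) : quadPoly α β ≠ 0 := fun h => by
  simpa [quadPoly, hβ] using congrArg (eval 0) h

theorem quadPoly_add : quadPoly α β + quadPoly α' β' = quadPoly (α + α') (β + β') := by
  simp only [quadPoly, ofReal_add, C_add]; ring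

theorem quadPoly_sub : quadPoly α β - quadPoly α' β' = quadPoly (α - α') (β - β') := by
  simp only [quadPoly, ofReal_sub, C_sub]; ring

theorem norm_eval_quadPoly_sq (α β : ℝ) (hz : ‖z‖ = 1) :
    ‖(quadPoly α β).eval z‖ ^ 2 = (α + β) ^ 2 - 4 * α * β * z.re ^ 2 := by
  rw [Complex.sq_norm, normSq_apply]
  simp only [quadPoly, sq, eval_sub, eval_mul, eval_C, eval_X, sub_re, mul_re, ofReal_re,
    ofReal_im, mul_im, zero_mul, sub_zero, sub_im, add_zero]
  linear_combination (α ^ 2 * (z.re ^ 2 + z.im ^ 2 + 1) + 2 * α * β) *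
    re_sq_add_im_sq_of_norm_eq_one hz

theorem norm_eval_quadPoly_le_one (hα : 0 ≤ α) (hβ : 0 ≤ β) (h : α + β = 1) (hz : ‖z‖ = 1) :
    ‖(quadPoly α β).eval z‖ ≤ 1 := by
  rw [← sq_le_one_iff₀ (norm_nonneg _), norm_eval_quadPoly_sq α β hz, h]
  nlinarith [mul_nonneg (mul_nonneg hα hβ) (sq_nonneg z.re)]

noncomputable def Q : ℂ[X] := C (3 / 10) * X ^ 2 + C (4 / 5) * X - C (3 / 10)

theorem natDegree_Q_le : Q.natDegree ≤ 2 := by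
  unfold Q; compute_degree

theorem norm_eval_Q_sq (hz : ‖z‖ = 1) : ‖Q.eval z‖ ^ 2 = 1 - 9 / 25 * z.re ^ 2 := by
  rw [Complex.sq_norm, normSq_apply]
  simp only [Q, sq, eval_sub, eval_add, eval_mul, eval_C, eval_X, sub_re, add_re, mul_re,
    div_ofNat_re, re_ofNat, div_ofNat_im, im_ofNat, zero_div, mul_im, zero_mul, sub_zero, sub_im,
    add_im, add_zero]
  linear_combination (9 / 100 * z.im ^ 2 + 9 / 100 * z.re ^ 2 + 12 / 25 * z.re + 91 / 100) *
    re_sq_add_im_sq_of_norm_eq_one hz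

theorem norm_eval_Q_le_one (hz : ‖z‖ = 1) : ‖Q.eval z‖ ≤ 1 := by
  rw [← sq_le_one_iff₀ (norm_nonneg _), norm_eval_Q_sq hz]
  nlinarith [sq_nonneg z.re]

theorem norm_eval_Q_eq_one (hz : ‖z‖ = 1) (hre : z.re = 0) : ‖Q.eval z‖ = 1 := by
  rw [← pow_eq_one_iff_of_nonneg (norm_nonneg _) two_ne_zero, norm_eval_Q_sq hz, hre]
  norm_num

theorem conj_eval_Q_I : conj (Q.eval I) = ⟨-3 / 5, -4 / 5⟩ := by
  apply Complex.ext <;> norm_num [Q, map_ofNat]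

theorem conj_eval_Q_neg_I : conj (Q.eval (-I)) = ⟨-3 / 5, 4 / 5⟩ := by
  apply Complex.ext <;> norm_num [Q, map_ofNat]

theorem eq_zero_of_norm_eval_Q_add_sub_le_one {R : ℂ[X]} (hR : R.natDegree ≤ 2)
    (hadd : ∀ z : ℂ, ‖z‖ = 1 → ‖(Q + R).eval z‖ ≤ 1)
    (hsub : ∀ z : ℂ, ‖z‖ = 1 → ‖(Q - R).eval z‖ ≤ 1) : R = 0 := by
  have key (z₀ : ℂ) (hz₀ : ‖z₀‖ = 1) (hre : z₀.re = 0) :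
      R.eval z₀ = 0 ∧ (conj (Q.eval z₀) * (z₀ * R.derivative.eval z₀)).im = 0 :=
    eq_zero_and_im_conj_mul_deriv_eq_zero_of_norm_add_sub_le_one (Q.hasDerivAt z₀)
      (R.hasDerivAt z₀) hz₀ (norm_eval_Q_eq_one hz₀ hre) (by simpa using hadd) (by simpa using hsub)
  obtain ⟨hI, hderivI⟩ := key I (by simp) (by simp)
  obtain ⟨hnegI, hderivNegI⟩ := key (-I) (by simp) (by simp)
  have hI_ne : I ≠ -I := by norm_num [Complex.ext_iff]
  rw [eq_C_leadingCoeff_mul_of_natDegree_le_two hI_ne hR hI hnegI,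
    eval_derivative_C_mul_X_sub_C_mul_X_sub_C, conj_eval_Q_I] at hderivI
  rw [eq_C_leadingCoeff_mul_of_natDegree_le_two hI_ne.symm hR hnegI hI,
    eval_derivative_C_mul_X_sub_C_mul_X_sub_C, conj_eval_Q_neg_I] at hderivNegI
  simp only [mul_im, mul_re, sub_re, sub_im, neg_re, neg_im, I_re, I_im] at hderivI hderivNegI
  exact leadingCoeff_eq_zero.1 <|
    Complex.ext (by rw [zero_re]; linarith) (by rw [zero_im]; linarith)

theorem exists_add_eq_one_mul_eq : ∃ a b : ℝ, 0 < b ∧ b ≤ a ∧ a + b = 1 ∧ a * b = 9 / 50 := by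
  have h7 : √7 ^ 2 = 7 := Real.sq_sqrt (by norm_num)
  have hlt : √7 < 3 := by rw [Real.sqrt_lt' three_pos]; norm_num
  refine ⟨(5 + √7) / 10, (5 - √7) / 10, by linarith, by linarith [Real.sqrt_nonneg 7], by ring,
    ?_⟩
  linear_combination (-1 / 100) * h7

end ExtremePair

open ExtremePair

/-- There exist unit-norm polynomials `P, Q` of degree ≤ N (for some `N`) with
`1 − |P|² = 2(1 − |Q|²)` on the unit circle, such that `P` is a non-extreme
point of the unit ball of `𝒫_N` while `Q` is extreme. -/
theorem exists_extreme_nonextreme_pair :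
    ∃ (N : ℕ) (P Q : Polynomial ℂ),
      P.natDegree ≤ N ∧ Q.natDegree ≤ N ∧
      (∀ z : ℂ, ‖z‖ = 1 → ‖P.eval z‖ ≤ 1) ∧
      (∃ z : ℂ, ‖z‖ = 1 ∧ ‖P.eval z‖ = 1) ∧
      (∀ z : ℂ, ‖z‖ = 1 → ‖Q.eval z‖ ≤ 1) ∧
      (∃ z : ℂ, ‖z‖ = 1 ∧ ‖Q.eval z‖ = 1) ∧
      (∀ z : ℂ, ‖z‖ = 1 →
        1 - ‖P.eval z‖ ^ 2 = 2 * (1 - ‖Q.eval z‖ ^ 2)) ∧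
      (∃ R : Polynomial ℂ, R ≠ 0 ∧ R.natDegree ≤ N ∧
        (∀ z : ℂ, ‖z‖ = 1 → ‖(P + R).eval z‖ ≤ 1) ∧
        (∀ z : ℂ, ‖z‖ = 1 → ‖(P - R).eval z‖ ≤ 1)) ∧
      (∀ R : Polynomial ℂ, R.natDegree ≤ N →
        (∀ z : ℂ, ‖z‖ = 1 → ‖(Q + R).eval z‖ ≤ 1) →
        (∀ z : ℂ, ‖z‖ = 1 → ‖(Q - R).eval z‖ ≤ 1) →
        R = 0) := by
  obtain ⟨a, b, hb, hba, hab, hprod⟩ := exists_add_eq_one_mul_eq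
  have hP (z : ℂ) (hz : ‖z‖ = 1) : ‖(quadPoly a b).eval z‖ ^ 2 = 1 - 18 / 25 * z.re ^ 2 := by
    rw [norm_eval_quadPoly_sq a b hz, hab]
    linear_combination (-4 * z.re ^ 2) * hprod
  refine ⟨2, quadPoly a b, Q, natDegree_quadPoly_le a b, natDegree_Q_le,
    fun z hz => norm_eval_quadPoly_le_one (hb.le.trans hba) hb.le hab hz,
    ⟨I, norm_I, (pow_eq_one_iff_of_nonneg (norm_nonneg _) two_ne_zero).1 (by simp [hP I norm_I])⟩,
    fun z hz => norm_eval_Q_le_one hz, ⟨I, norm_I, norm_eval_Q_eq_one norm_I I_re⟩,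
    fun z hz => by rw [hP z hz, norm_eval_Q_sq hz]; ring,
    ⟨quadPoly b (-b), quadPoly_ne_zero (neg_ne_zero.2 hb.ne'), natDegree_quadPoly_le b (-b),
      fun z hz => ?_, fun z hz => ?_⟩,
    fun R hR => eq_zero_of_norm_eval_Q_add_sub_le_one hR⟩
  · rw [quadPoly_add]
    exact norm_eval_quadPoly_le_one (by linarith) (by simp) (by simp [hab]) hz
  · rw [quadPoly_sub]
    exact norm_eval_quadPoly_le_one (by linarith) (by linarith) (by linarith) hz
end
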